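/- Let f : α → α and g : β → β be connected FGs on finite nonempty types with cycle lengths c_A and c_B, and let p ≥ 1 be such that lcm(c_A, p) = c_B. Then for every m : ℕ and every family of FGs hᵢ : γᵢ → γᵢ (i = 1, …, m) on finite nonempty types such that each hᵢ is connected, each hᵢ has exactly p periodic points, each product FG f × hᵢ contains g (i.e., there is an injection e : β → α × γᵢ with e ∘ g = (f × hᵢ) ∘ e whose range is closed under preimages of f × hᵢ), and the hᵢ are pairwise non-isomorphic as FGs, one has m ≤ c_A. -/

import Mathlib

namespace DDS

/-- A homomorphism of digraphs `(γ, E) → (δ, E')` is a map preserving edges. -/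
def IsHom {γ : Type*} {δ : Type*} (E : γ → γ → Prop) (E' : δ → δ → Prop) (τ : γ → δ) : Prop :=
  ∀ ⦃u v⦄, E u v → E' (τ u) (τ v)

/-- Two digraphs are isomorphic if there is an edge-preserving (in both directions) bijection. -/
def Isomorphic {γ : Type*} {δ : Type*} (E : γ → γ → Prop) (E' : δ → δ → Prop) : Prop :=
  ∃ e : γ ≃ δ, ∀ u v, E u v ↔ E' (e u) (e v)

/-- The number of digraph homomorphisms from `(γ, E)` to `(δ, E')`. -/
noncomputable def homCount (γ : Type*) (δ : Type*) (E : γ → γ → Prop) (E' : δ → δ → Prop) : ℕ :=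
  Nat.card {τ : γ → δ // IsHom E E' τ}

/-- An in-tree: a root and a parent map such that the root is a fixed point and every
vertex reaches the root by iterating the parent map. -/
structure InTree (V : Type*) where
  root : V
  parent : V → V
  parent_root : parent root = root
  reaches_root : ∀ v, ∃ k, parent^[k] v = root

namespace InTree

variable {V : Type*}

/-- Edges of an in-tree are directed towards the root. -/
def Edge (T : InTree V) (v w : V) : Prop := v ≠ T.root ∧ w = T.parent v

/-- The height of a vertex: the least `k` with `parent^[k] v = root`. -/
noncomputable def height (T : InTree V) (v : V) : ℕ := sInf {k | T.parent^[k] v = T.root}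

lemma height_spec (T : InTree V) (v : V) : T.parent^[T.height v] v = T.root :=
  Nat.sInf_mem (T.reaches_root v)

@[simp] lemma height_root (T : InTree V) : T.height T.root = 0 :=
  Nat.sInf_eq_zero.mpr (Or.inl (by simp))

lemma height_eq_zero_iff (T : InTree V) {v : V} : T.height v = 0 ↔ v = T.root := by
  constructor
  · intro h
    have hs := T.height_spec v
    rw [h] at hs
    simpa using hs
  · rintro rfl
    exact T.height_root

lemma height_parent (T : InTree V) {v : V} (hv : v ≠ T.root) :
    T.height v = T.height (T.parent v) + 1 := by
  have h1 : T.height v ≠ 0 := fun h => hv (T.height_eq_zero_iff.mp h)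
  obtain ⟨m, hm⟩ := Nat.exists_eq_succ_of_ne_zero h1
  have hsp : T.parent^[T.height v] v = T.root := T.height_spec v
  rw [hm, Function.iterate_succ_apply] at hsp
  have hle : T.height (T.parent v) ≤ m := Nat.sInf_le hsp
  have hge : T.height v ≤ T.height (T.parent v) + 1 := by
    apply Nat.sInf_le
    show T.parent^[T.height (T.parent v) + 1] v = T.root
    rw [Function.iterate_succ_apply]
    exact T.height_spec (T.parent v)
  omega

lemma height_parent_le (T : InTree V) (v : V) : T.height (T.parent v) ≤ T.height v := by
  by_cases hv : v = T.root
  · subst hv; rw [T.parent_root]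
  · rw [T.height_parent hv]; omega

/-- The height of a finite in-tree: the maximum height of a vertex. -/
noncomputable def treeHeight [Fintype V] (T : InTree V) : ℕ := Finset.univ.sup T.height

section Star

variable {V₁ V₂ : Type*} (T₁ : InTree V₁) (T₂ : InTree V₂)

/-- Vertices of the `⋆` product: pairs of vertices of equal height. -/
def StarVertex := {x : V₁ × V₂ // T₁.height x.1 = T₂.height x.2}

lemma star_parent_mem (x : V₁ × V₂) (hx : T₁.height x.1 = T₂.height x.2) :
    T₁.height (T₁.parent x.1) = T₂.height (T₂.parent x.2) := by
  by_cases h : x.1 = T₁.root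
  · have h2 : x.2 = T₂.root := by
      apply T₂.height_eq_zero_iff.mp
      rw [← hx, h, T₁.height_root]
    rw [h, h2, T₁.parent_root, T₂.parent_root, T₁.height_root, T₂.height_root]
  · have h2 : x.2 ≠ T₂.root := by
      intro hc
      apply h
      apply T₁.height_eq_zero_iff.mp
      rw [hx, hc, T₂.height_root]
    have e1 := T₁.height_parent h
    have e2 := T₂.height_parent h2
    omega

/-- The parent map of the `⋆` product. -/
def starParent (x : StarVertex T₁ T₂) : StarVertex T₁ T₂ :=
  ⟨(T₁.parent x.1.1, T₂.parent x.1.2), star_parent_mem T₁ T₂ x.1 x.2⟩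

lemma starParent_iterate (k : ℕ) (x : StarVertex T₁ T₂) :
    ((starParent T₁ T₂)^[k] x).1 = (T₁.parent^[k] x.1.1, T₂.parent^[k] x.1.2) := by
  induction k generalizing x with
  | zero => simp
  | succ k ih =>
      rw [Function.iterate_succ_apply, Function.iterate_succ_apply,
        Function.iterate_succ_apply, ih]
      rfl

/-- The `⋆` product of two in-trees. -/
def star : InTree (StarVertex T₁ T₂) where
  root := ⟨(T₁.root, T₂.root), by simp⟩
  parent := starParent T₁ T₂
  parent_root := by
    apply Subtype.ext
    show (T₁.parent T₁.root, T₂.parent T₂.root) = (T₁.root, T₂.root)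
    rw [T₁.parent_root, T₂.parent_root]
  reaches_root := by
    intro x
    refine ⟨T₁.height x.1.1, Subtype.ext ?_⟩
    rw [starParent_iterate]
    have h1 : T₁.parent^[T₁.height x.1.1] x.1.1 = T₁.root := T₁.height_spec _
    have h2 : T₂.parent^[T₁.height x.1.1] x.1.2 = T₂.root := by
      rw [x.2]; exact T₂.height_spec _
    show (_, _) = (T₁.root, T₂.root)
    rw [h1, h2]

end Star

section Cut

variable (T : InTree V) (t : ℕ)

/-- Vertices of the cut at level `t`: vertices of height at most `t`. -/
def CutVertex := {v : V // T.height v ≤ t}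

/-- The parent map of the cut. -/
def cutParent (x : CutVertex T t) : CutVertex T t :=
  ⟨T.parent x.1, le_trans (T.height_parent_le x.1) x.2⟩

lemma cutParent_iterate (k : ℕ) (x : CutVertex T t) :
    ((cutParent T t)^[k] x).1 = T.parent^[k] x.1 := by
  induction k generalizing x with
  | zero => simp
  | succ k ih =>
      rw [Function.iterate_succ_apply, Function.iterate_succ_apply, ih]
      rfl

/-- The cut of an in-tree at level `t`: the sub-in-tree induced on vertices of height `≤ t`. -/
def cut : InTree (CutVertex T t) where
  root := ⟨T.root, by simp⟩
  parent := cutParent T t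
  parent_root := Subtype.ext T.parent_root
  reaches_root := fun x =>
    ⟨T.height x.1, Subtype.ext (by rw [cutParent_iterate]; exact T.height_spec x.1)⟩

end Cut

end InTree

section Unroll

variable {α : Type*} (f : α → α) (v : α)

/-- Vertices of the unroll of the functional graph of `f` from `v`. -/
def UnrollVertex := {ui : α × ℕ // f^[ui.2] ui.1 = v}

/-- The parent map of the unroll: `(u, i+1) ↦ (f u, i)`, fixing the root `(v, 0)`. -/
def unrollParent : UnrollVertex f v → UnrollVertex f v
  | ⟨(u, 0), h⟩ => ⟨(u, 0), h⟩
  | ⟨(u, i+1), h⟩ => ⟨(f u, i), by rw [← Function.iterate_succ_apply]; exact h⟩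

lemma unrollParent_iterate :
    ∀ (i : ℕ) (u : α) (h : f^[i] u = v),
      (unrollParent f v)^[i] ⟨(u, i), h⟩ = ⟨(v, 0), rfl⟩ := by
  intro i
  induction i with
  | zero =>
      intro u h
      have hu : u = v := by simpa using h
      subst hu
      rfl
  | succ i ih =>
      intro u h
      erw [Function.iterate_succ_apply]
      show (unrollParent f v)^[i] ⟨(f u, i), _⟩ = _
      exact ih (f u) _

/-- The unroll of the functional graph of `f : α → α` from the point `v`. -/
def unroll : InTree (UnrollVertex f v) where
  root := ⟨(v, 0), rfl⟩
  parent := unrollParent f v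
  parent_root := rfl
  reaches_root := fun x => ⟨x.1.2, by
    obtain ⟨⟨u, i⟩, h⟩ := x
    exact unrollParent_iterate f v i u h⟩

end Unroll

section FG

/-- The number of periodic points of `f`. -/
noncomputable def periodicCount {α : Type*} (f : α → α) : ℕ :=
  Nat.card {x : α // ∃ n, 1 ≤ n ∧ f^[n] x = x}

/-- A functional graph is connected if the equivalence relation generated by
`x ∼ f x` relates all pairs of points. -/
def FGConnected {α : Type*} (f : α → α) : Prop :=
  ∀ x y : α, Relation.EqvGen (fun u w => f u = w) x y

/-- Isomorphism of functional graphs. -/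
def FGIso {α β : Type*} (f : α → α) (g : β → β) : Prop :=
  ∃ e : α ≃ β, ∀ x, e (f x) = g (e x)

/-- The product of two functional graphs. -/
def prodMap {α γ : Type*} (f : α → α) (h : γ → γ) : α × γ → α × γ :=
  fun z => (f z.1, h z.2)

/-- `FGContains f h g` means the functional graph of `g` is (isomorphic to) a union of
connected components of the product `f × h`. -/
def FGContains {α γ β : Type*} (f : α → α) (h : γ → γ) (g : β → β) : Prop :=
  ∃ e : β → α × γ, Function.Injective e ∧ e ∘ g = prodMap f h ∘ e ∧
    ∀ z, prodMap f h z ∈ Set.range e → z ∈ Set.range e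

end FG

end DDS

open DDS DDS.InTree

/-!
Fix a periodic point `b` of `g`. Each embedding `eᵢ` of `g` into `f × hᵢ` sends `b` to a periodic
point, whose first coordinate is one of the `c_A` periodic points of `f`; so it suffices to show
that `hᵢ ≅ hⱼ` as soon as `eᵢ b = (a, wᵢ)` and `eⱼ b = (a, wⱼ)` share their first coordinate.

Count pointed homomorphisms out of connected test graphs `T`. As `g` is a union of components of
both products, `hom(T, f) · hom(T, hᵢ) = hom(T, g) = hom(T, f) · hom(T, hⱼ)` (based at `a`, `wᵢ`,
`b`, `a`, `wⱼ`). If `T` maps to the cycle `C_c` of length `c = minimalPeriod f a`, it maps to the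
orbit of `a`, so the factor `hom(T, f)` is non-zero and cancels; hence `hom(T, C_c × hᵢ) = hom(T, C_c × hⱼ)` for every `T`. Lovász's argument turns this
into an embedding of the component of `(0, wᵢ)` in `C_c × hᵢ` into `C_c × hⱼ`. Such an embedding
preserves the `C_c`-coordinate and the distance to the cycle, so, the cycles of `hᵢ` and `hⱼ`
having the same length `p`, its restriction to a canonical lift of `hᵢ` embeds `hᵢ` into `hⱼ`.
By symmetry, `hᵢ ≅ hⱼ`.
-/

open Function Set

namespace DDS

section Iterate

variable {α : Type*} {f : α → α}

theorem eqvGen_iterate (f : α → α) (x : α) (n : ℕ) :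
    Relation.EqvGen (fun u w => f u = w) x (f^[n] x) := by
  induction n with
  | zero => exact .refl x
  | succ n ih => exact ih.trans _ _ _ (.rel _ _ (iterate_succ_apply' f n x).symm)

theorem eqvGen_iff_exists_iterate_eq {x y : α} :
    Relation.EqvGen (fun u w => f u = w) x y ↔ ∃ k l, f^[k] x = f^[l] y := by
  refine ⟨fun h => ?_, fun ⟨k, l, hkl⟩ => ?_⟩
  · induction h with
    | rel a b hab => exact ⟨1, 0, hab⟩
    | refl a => exact ⟨0, 0, rfl⟩
    | symm a b _ ih => obtain ⟨k, l, h⟩ := ih; exact ⟨l, k, h.symm⟩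
    | trans a b c _ _ ih₁ ih₂ =>
      obtain ⟨k, l, h₁⟩ := ih₁
      obtain ⟨k', l', h₂⟩ := ih₂
      refine ⟨k' + k, l + l', ?_⟩
      rw [iterate_add_apply, h₁, ← iterate_add_apply, add_comm, iterate_add_apply, h₂,
        ← iterate_add_apply]
  · refine (eqvGen_iterate f x k).trans _ _ _ ?_
    rw [hkl]
    exact (eqvGen_iterate f y l).symm

theorem fgConnected_iff_exists_iterate_eq :
    FGConnected f ↔ ∀ x y, ∃ k l, f^[k] x = f^[l] y :=
  forall₂_congr fun _ _ => eqvGen_iff_exists_iterate_eq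

theorem exists_iterate_mem_periodicPts [Finite α] (f : α → α) (x : α) :
    ∃ n, f^[n] x ∈ periodicPts f := by
  obtain ⟨i, j, hne, hij⟩ := Finite.exists_ne_map_eq_of_infinite fun n : ℕ => f^[n] x
  wlog hlt : i < j generalizing i j
  · exact this j i hne.symm hij.symm (by omega)
  refine ⟨i, mk_mem_periodicPts (Nat.sub_pos_of_lt hlt) ?_⟩
  change f^[j - i] (f^[i] x) = f^[i] x
  rw [← iterate_add_apply, Nat.sub_add_cancel hlt.le]
  exact hij.symm

theorem FGConnected.exists_iterate_eq_of_mem_periodicPts (hf : FGConnected f) (x : α) {y : α}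
    (hy : y ∈ periodicPts f) : ∃ n, f^[n] x = y := by
  obtain ⟨k, l, hkl⟩ := fgConnected_iff_exists_iterate_eq.mp hf x y
  set q := minimalPeriod f y
  have hq : 0 < q := minimalPeriod_pos_of_mem_periodicPts hy
  refine ⟨q * l - l + k, ?_⟩
  rw [iterate_add_apply, hkl, ← iterate_add_apply, Nat.sub_add_cancel (Nat.le_mul_of_pos_left l hq),
    iterate_mul, (isPeriodicPt_minimalPeriod f y).isFixedPt.iterate]

theorem iterate_eq_iterate_of_minimalPeriod_eq {β : Type*} {g : β → β} {x : α} {y : β}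
    (hx : x ∈ periodicPts f) (hxy : minimalPeriod f x = minimalPeriod g y) {m n : ℕ}
    (h : f^[m] x = f^[n] x) : g^[m] y = g^[n] y := by
  have hp := minimalPeriod_pos_of_mem_periodicPts hx
  rw [← iterate_mod_minimalPeriod_eq (n := m), ← iterate_mod_minimalPeriod_eq (n := n)] at h ⊢
  rw [← hxy, iterate_injOn_Iio_minimalPeriod (Nat.mod_lt _ hp) (Nat.mod_lt _ hp) h]

theorem FGConnected.periodicPts_eq_image (hf : FGConnected f) {x : α} (hx : x ∈ periodicPts f) :
    periodicPts f = (f^[·] x) '' Iio (minimalPeriod f x) := by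
  ext y
  refine ⟨fun hy => ?_, ?_⟩
  · obtain ⟨n, rfl⟩ := hf.exists_iterate_eq_of_mem_periodicPts x hy
    exact ⟨n % minimalPeriod f x, Nat.mod_lt _ (minimalPeriod_pos_of_mem_periodicPts hx),
      iterate_mod_minimalPeriod_eq⟩
  · rintro ⟨n, -, rfl⟩
    exact (bijOn_periodicPts f).mapsTo.iterate n hx

theorem FGConnected.periodicCount_eq_minimalPeriod (hf : FGConnected f) {x : α}
    (hx : x ∈ periodicPts f) : periodicCount f = minimalPeriod f x := by
  change Nat.card (periodicPts f) = _
  rw [Nat.card_coe_set_eq, hf.periodicPts_eq_image hx,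
    iterate_injOn_Iio_minimalPeriod.ncard_image, ncard_Iio_nat]

end Iterate

theorem mem_periodicPts_iff_of_injective {X Y : Type*} {Fx : X → X} {Fy : Y → Y} {τ : X → Y}
    (hτ : Injective τ) (hs : Semiconj τ Fx Fy) {x : X} :
    τ x ∈ periodicPts Fy ↔ x ∈ periodicPts Fx :=
  ⟨fun ⟨n, hn, hx⟩ => ⟨n, hn, hτ ((hs.iterate_right n x).trans hx)⟩,
    fun hx => hs.mapsTo_periodicPts hx⟩

section PointedHom

variable {T X Y Z : Type*} {Tf : T → T} {Fx : X → X} {Fy : Y → Y} {t₀ : T}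

def PointedHom (Tf : T → T) (Fx : X → X) (t₀ : T) (x₀ : X) : Type _ :=
  {τ : T → X // Semiconj τ Tf Fx ∧ τ t₀ = x₀}

noncomputable def numHom (Tf : T → T) (Fx : X → X) (t₀ : T) (x₀ : X) : ℕ :=
  Nat.card (PointedHom Tf Fx t₀ x₀)

noncomputable def numEmb (Tf : T → T) (Fx : X → X) (t₀ : T) (x₀ : X) : ℕ :=
  Nat.card {τ : PointedHom Tf Fx t₀ x₀ // Injective τ.1}

instance [Finite T] [Finite X] {x₀ : X} : Finite (PointedHom Tf Fx t₀ x₀) :=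
  Subtype.finite

theorem prodMap_iterate (f : X → X) (g : Y → Y) (n : ℕ) (z : X × Y) :
    (prodMap f g)^[n] z = (f^[n] z.1, g^[n] z.2) :=
  congrFun (Prod.map_iterate f g n) z

theorem mem_periodicPts_prodMap {f : X → X} {g : Y → Y} {z : X × Y}
    (hz : z ∈ periodicPts (prodMap f g)) : z.1 ∈ periodicPts f ∧ z.2 ∈ periodicPts g :=
  let ⟨_, hn, hz⟩ := hz
  ⟨mk_mem_periodicPts hn ((isPeriodicPt_prodMap _).mp hz).1,
    mk_mem_periodicPts hn ((isPeriodicPt_prodMap _).mp hz).2⟩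

def pointedHomProdEquiv (x₀ : X) (y₀ : Y) :
    PointedHom Tf (prodMap Fx Fy) t₀ (x₀, y₀) ≃
      PointedHom Tf Fx t₀ x₀ × PointedHom Tf Fy t₀ y₀ where
  toFun τ := (⟨Prod.fst ∘ τ.1, fun t => congrArg Prod.fst (τ.2.1 t), congrArg Prod.fst τ.2.2⟩,
    ⟨Prod.snd ∘ τ.1, fun t => congrArg Prod.snd (τ.2.1 t), congrArg Prod.snd τ.2.2⟩)
  invFun σ := ⟨fun t => (σ.1.1 t, σ.2.1 t), fun t => Prod.ext (σ.1.2.1 t) (σ.2.2.1 t),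
    Prod.ext σ.1.2.2 σ.2.2.2⟩
  left_inv _ := rfl
  right_inv _ := rfl

theorem numHom_prodMap (x₀ : X) (y₀ : Y) :
    numHom Tf (prodMap Fx Fy) t₀ (x₀, y₀) = numHom Tf Fx t₀ x₀ * numHom Tf Fy t₀ y₀ := by
  rw [numHom, Nat.card_congr (pointedHomProdEquiv x₀ y₀), Nat.card_prod, numHom, numHom]

def IsComponentEmbedding (F : Z → Z) (Fx : X → X) (e : X → Z) : Prop :=
  Injective e ∧ e ∘ Fx = F ∘ e ∧ ∀ z, F z ∈ range e → z ∈ range e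

theorem fgContains_iff {α γ β : Type*} {f : α → α} {h : γ → γ} {g : β → β} :
    FGContains f h g ↔ ∃ e, IsComponentEmbedding (prodMap f h) g e :=
  Iff.rfl

namespace IsComponentEmbedding

variable {F : Z → Z} {e : X → Z}

theorem semiconj (he : IsComponentEmbedding F Fx e) : Semiconj e Fx F :=
  semiconj_iff_comp_eq.mpr he.2.1

theorem mem_range_of_iterate_mem_range (he : IsComponentEmbedding F Fx e) {z : Z} (n : ℕ)
    (hz : F^[n] z ∈ range e) : z ∈ range e := by
  induction n generalizing z with
  | zero => exact hz
  | succ n ih => exact he.2.2 z (ih (by rwa [← iterate_succ_apply]))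

/-- Pointed homomorphisms out of a connected graph cannot leave a union of components. -/
theorem numHom_eq (he : IsComponentEmbedding F Fx e) (hT : FGConnected Tf) (x₀ : X) :
    numHom Tf Fx t₀ x₀ = numHom Tf F t₀ (e x₀) := by
  refine Nat.card_congr (Equiv.ofBijective (fun τ => ⟨e ∘ τ.1, he.semiconj.comp_left τ.2.1,
    congrArg e τ.2.2⟩) ⟨fun τ τ' hττ' => ?_, fun σ => ?_⟩)
  · exact Subtype.ext (he.1.comp_left (congrArg Subtype.val hττ'))
  · have hσ : ∀ t, σ.1 t ∈ range e := fun t => by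
      obtain ⟨k, l, hkl⟩ := fgConnected_iff_exists_iterate_eq.mp hT t t₀
      refine he.mem_range_of_iterate_mem_range k ⟨Fx^[l] x₀, ?_⟩
      rw [← σ.2.1.iterate_right, hkl, σ.2.1.iterate_right, σ.2.2, he.semiconj.iterate_right]
    choose τ hτ using hσ
    refine ⟨⟨τ, fun t => he.1 ?_, he.1 ?_⟩, Subtype.ext (funext hτ)⟩
    · rw [hτ, σ.2.1, ← hτ, he.semiconj]
    · rw [hτ, σ.2.2]

end IsComponentEmbedding

end PointedHom

section Lovasz

variable {T X Y : Type*} {Tf : T → T} {Fx : X → X} {Fy : Y → Y} {t₀ : T}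

def Congruence (Tf : T → T) : Type _ :=
  {S : Setoid T // ∀ ⦃a b⦄, S a b → S (Tf a) (Tf b)}

namespace Congruence

instance [Finite T] : Finite (Congruence Tf) :=
  have : Finite (Setoid T) :=
    Finite.of_injective (fun S : Setoid T => (S : T → T → Prop)) fun _ _ h =>
      Setoid.ext fun a b => Iff.of_eq (congrFun₂ h a b)
  Subtype.finite

def bot (Tf : T → T) : Congruence Tf :=
  ⟨⊥, fun a b hab => by rw [Setoid.bot_def] at hab ⊢; rw [hab]⟩

def ker {x₀ : X} (τ : PointedHom Tf Fx t₀ x₀) : Congruence Tf :=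
  ⟨Setoid.ker τ.1, fun a b hab => by
    simp only [Setoid.ker_def] at hab ⊢
    rw [τ.2.1, τ.2.1, hab]⟩

theorem ker_eq_bot_iff {x₀ : X} {τ : PointedHom Tf Fx t₀ x₀} : ker τ = bot Tf ↔ Injective τ.1 :=
  Subtype.ext_iff.trans Setoid.ker_eq_bot_iff

def quotMap (S : Congruence Tf) : Quotient S.1 → Quotient S.1 :=
  Quotient.map Tf S.2

theorem fgConnected_quotMap (hT : FGConnected Tf) (S : Congruence Tf) :
    FGConnected (quotMap S) := by
  refine fgConnected_iff_exists_iterate_eq.mpr fun x y => ?_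
  induction x using Quotient.inductionOn with | _ a => ?_
  induction y using Quotient.inductionOn with | _ b => ?_
  obtain ⟨k, l, hkl⟩ := fgConnected_iff_exists_iterate_eq.mp hT a b
  have hmk : Semiconj (Quotient.mk S.1) Tf (quotMap S) := fun _ => rfl
  exact ⟨k, l, by rw [← hmk.iterate_right, ← hmk.iterate_right, hkl]⟩

theorem card_quotient_lt [Finite T] {S : Congruence Tf} (hS : S ≠ bot Tf) :
    Nat.card (Quotient S.1) < Nat.card T := by
  have := Fintype.ofFinite T
  have := Fintype.ofFinite (Quotient S.1)
  rw [Nat.card_eq_fintype_card, Nat.card_eq_fintype_card]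
  refine Fintype.card_lt_of_surjective_not_injective _ Quotient.mk_surjective fun hinj => hS ?_
  refine Subtype.ext (Setoid.ext fun a b => ?_)
  change S.1 a b ↔ (⊥ : Setoid T) a b
  rw [Setoid.bot_def]
  exact ⟨fun hab => hinj (Quotient.sound hab), fun hab => hab ▸ S.1.refl a⟩

def kerFiberEquiv {x₀ : X} (S : Congruence Tf) :
    {τ : PointedHom Tf Fx t₀ x₀ // ker τ = S} ≃
      {σ : PointedHom (quotMap S) Fx (Quotient.mk S.1 t₀) x₀ // Injective σ.1} where
  toFun τ :=
    have hle : S.1 ≤ Setoid.ker τ.1.1 := fun a b hab => by rwa [← τ.2] at hab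
    ⟨⟨Quotient.lift τ.1.1 hle, fun q => q.inductionOn fun a => τ.1.2.1 a, τ.1.2.2⟩,
      (Setoid.lift_injective_iff_ker_eq_of_le hle).mpr (congrArg Subtype.val τ.2)⟩
  invFun σ := ⟨⟨σ.1.1 ∘ Quotient.mk S.1, fun t => σ.1.2.1 (Quotient.mk S.1 t), σ.1.2.2⟩,
    Subtype.ext (Setoid.ext fun a b => (σ.2.eq_iff.trans Quotient.eq).trans Iff.rfl)⟩
  left_inv _ := rfl
  right_inv σ := Subtype.ext (Subtype.ext (funext fun q => q.inductionOn fun _ => rfl))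

end Congruence

open Classical Congruence in
/-- Counting pointed homomorphisms by their kernels. -/
theorem numHom_eq_numEmb_add_sum [Finite T] [Finite X] [Fintype (Congruence Tf)] (x₀ : X) :
    numHom Tf Fx t₀ x₀ = numEmb Tf Fx t₀ x₀ +
      ∑ S ∈ Finset.univ.erase (bot Tf), numEmb (quotMap S) Fx (Quotient.mk S.1 t₀) x₀ := by
  rw [numHom, ← Nat.card_congr (Equiv.sigmaFiberEquiv (ker (Fx := Fx) (t₀ := t₀) (x₀ := x₀))),
    Nat.card_sigma, ← Finset.add_sum_erase _ _ (Finset.mem_univ (bot Tf))]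
  congr 1
  · exact Nat.card_congr (Equiv.subtypeEquivRight fun _ => ker_eq_bot_iff)
  · exact Finset.sum_congr rfl fun S _ => Nat.card_congr (kerFiberEquiv S)

universe u

open Congruence in
/-- Lovász's argument: every non-injective homomorphism factors injectively through a strictly
smaller quotient, so induction on `Nat.card T` applies. -/
theorem numEmb_eq_of_numHom_eq [Finite X] [Finite Y] {x₀ : X} {y₀ : Y}
    (H : ∀ (T : Type u) [Finite T] (Tf : T → T) (t₀ : T),
      FGConnected Tf → numHom Tf Fx t₀ x₀ = numHom Tf Fy t₀ y₀)
    (T : Type u) [Finite T] (Tf : T → T) (t₀ : T) (hT : FGConnected Tf) :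
    numEmb Tf Fx t₀ x₀ = numEmb Tf Fy t₀ y₀ := by
  induction hn : Nat.card T using Nat.strong_induction_on generalizing T with
  | _ n ih =>
    classical
    have := Fintype.ofFinite (Congruence Tf)
    have hsum := H T Tf t₀ hT
    rw [numHom_eq_numEmb_add_sum, numHom_eq_numEmb_add_sum,
      Finset.sum_congr rfl fun S hS => ih _ (hn ▸ card_quotient_lt (Finset.ne_of_mem_erase hS))
        (Quotient S.1) (quotMap S) (Quotient.mk S.1 t₀) (fgConnected_quotMap hT S) rfl] at hsum
    exact Nat.add_right_cancel hsum

theorem exists_injective_of_numHom_eq [Finite X] [Finite Y] {x₀ : X} {y₀ : Y}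
    (H : ∀ (T : Type u) [Finite T] (Tf : T → T) (t₀ : T),
      FGConnected Tf → numHom Tf Fx t₀ x₀ = numHom Tf Fy t₀ y₀)
    {T : Type u} [Finite T] {Tf : T → T} (hT : FGConnected Tf) {t₀ : T} {τ : T → X}
    (hτ : Injective τ) (hτs : Semiconj τ Tf Fx) (hτ₀ : τ t₀ = x₀) :
    ∃ σ : T → Y, Injective σ ∧ Semiconj σ Tf Fy ∧ σ t₀ = y₀ := by
  have hX : numEmb Tf Fx t₀ x₀ ≠ 0 := Nat.card_ne_zero.mpr ⟨⟨⟨τ, hτs, hτ₀⟩, hτ⟩, inferInstance⟩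
  rw [numEmb_eq_of_numHom_eq H T Tf t₀ hT] at hX
  obtain ⟨⟨σ, hσs, hσ₀⟩, hσ⟩ := (Nat.card_ne_zero.mp hX).1.some
  exact ⟨σ, hσ, hσs, hσ₀⟩

end Lovasz

section Cycle

variable {T α γ : Type*} {Tf : T → T} {f : α → α} {h : γ → γ} {c : ℕ}

def cyc (c : ℕ) : ZMod c → ZMod c := (· + 1)

theorem cyc_iterate (n : ℕ) (s : ZMod c) : (cyc c)^[n] s = s + n := by
  induction n with
  | zero => simp
  | succ n ih => rw [iterate_succ_apply', ih, cyc, Nat.cast_succ, add_assoc]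

theorem mem_periodicPts_prodMap_cyc [NeZero c] (z : ZMod c × γ) :
    z ∈ periodicPts (prodMap (cyc c) h) ↔ z.2 ∈ periodicPts h := by
  refine ⟨fun hz => (mem_periodicPts_prodMap hz).2, fun ⟨n, hn, hy⟩ =>
    mk_mem_periodicPts (Nat.mul_pos hn (NeZero.pos c)) ?_⟩
  have hs : IsPeriodicPt (cyc c) c z.1 := by
    rw [IsPeriodicPt, IsFixedPt, cyc_iterate, ZMod.natCast_self, add_zero]
  exact (hs.const_mul n).prodMap (hy.mul_const c)

theorem eq_of_semiconj_cyc (hT : FGConnected Tf) {ψ ψ' : T → ZMod c}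
    (hψ : Semiconj ψ Tf (cyc c)) (hψ' : Semiconj ψ' Tf (cyc c)) {t₀ : T} (h₀ : ψ t₀ = ψ' t₀) :
    ψ = ψ' := by
  funext t
  obtain ⟨k, l, hkl⟩ := fgConnected_iff_exists_iterate_eq.mp hT t t₀
  have e := congrArg ψ hkl
  have e' := congrArg ψ' hkl
  rw [hψ.iterate_right, hψ.iterate_right, cyc_iterate, cyc_iterate] at e
  rw [hψ'.iterate_right, hψ'.iterate_right, cyc_iterate, cyc_iterate, ← h₀] at e'
  exact add_right_cancel (e.trans e'.symm)

theorem iterate_eq_iterate_of_natCast_eq {a : α} (ha : IsPeriodicPt f c a) {m n : ℕ}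
    (hmn : (m : ZMod c) = n) : f^[m] a = f^[n] a := by
  rw [← ha.iterate_mod_apply m, ← ha.iterate_mod_apply n,
    (ZMod.natCast_eq_natCast_iff' m n c).mp hmn]

theorem semiconj_cyc_iterate_val [NeZero c] {a : α} (ha : IsPeriodicPt f c a) :
    Semiconj (fun s : ZMod c => f^[s.val] a) (cyc c) f := fun s => by
  rw [← iterate_succ_apply' f]
  exact iterate_eq_iterate_of_natCast_eq ha (by simp [cyc])

theorem numHom_ne_zero_of_numHom_cyc_ne_zero [Finite T] [Finite α] [NeZero c] {a : α}
    (ha : IsPeriodicPt f c a) {t₀ : T} (hpos : numHom Tf (cyc c) t₀ 0 ≠ 0) :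
    numHom Tf f t₀ a ≠ 0 := by
  obtain ⟨ψ, hψ, hψ₀⟩ := (Nat.card_ne_zero.mp hpos).1.some
  refine Nat.card_ne_zero.mpr ⟨⟨⟨_, (semiconj_cyc_iterate_val ha).comp_left hψ, ?_⟩⟩, inferInstance⟩
  simp [hψ₀]

end Cycle

section Component

variable {Z : Type*} (F : Z → Z) (z : Z)

abbrev Component : Type _ :=
  {x : Z // Relation.EqvGen (fun u w => F u = w) x z}

namespace Component

def step (x : Component F z) : Component F z :=
  ⟨F x.1, .trans _ _ _ (.symm _ _ (.rel _ _ rfl)) x.2⟩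

def base : Component F z :=
  ⟨z, .refl z⟩

theorem semiconj_val : Semiconj Subtype.val (step F z) F :=
  fun _ => rfl

theorem fgConnected : FGConnected (step F z) := by
  refine fgConnected_iff_exists_iterate_eq.mpr fun x y => ?_
  obtain ⟨k, l, hx⟩ := eqvGen_iff_exists_iterate_eq.mp x.2
  obtain ⟨k', l', hy⟩ := eqvGen_iff_exists_iterate_eq.mp y.2
  refine ⟨k + l', l + k', Subtype.ext ?_⟩
  rw [(semiconj_val F z).iterate_right, (semiconj_val F z).iterate_right, add_comm k,
    iterate_add_apply, hx, ← iterate_add_apply, add_comm l', iterate_add_apply, ← hy,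
    ← iterate_add_apply]

end Component

end Component

section Depth

variable {γ : Type*} {h : γ → γ} {y w : γ}

noncomputable def depth (h : γ → γ) (y : γ) : ℕ :=
  sInf {n | h^[n] y ∈ periodicPts h}

theorem iterate_depth_mem_periodicPts [Finite γ] (y : γ) : h^[depth h y] y ∈ periodicPts h :=
  Nat.sInf_mem (exists_iterate_mem_periodicPts h y)

theorem depth_eq_zero (hy : y ∈ periodicPts h) : depth h y = 0 :=
  Nat.sInf_eq_zero.mpr (Or.inl hy)

theorem depth_apply_add_one [Finite γ] (hy : y ∉ periodicPts h) :
    depth h (h y) + 1 = depth h y := by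
  obtain ⟨d, hd⟩ : ∃ d, depth h y = d + 1 := Nat.exists_eq_add_one.mpr <|
    Nat.pos_of_ne_zero fun h0 => hy (by simpa [h0] using iterate_depth_mem_periodicPts (h := h) y)
  have hle : depth h (h y) ≤ d := Nat.sInf_le <| show h^[d] (h y) ∈ periodicPts h by
    rw [← iterate_succ_apply, Nat.succ_eq_add_one, ← hd]
    exact iterate_depth_mem_periodicPts y
  have hge : depth h y ≤ depth h (h y) + 1 := Nat.sInf_le <|
    show h^[depth h (h y) + 1] y ∈ periodicPts h from iterate_depth_mem_periodicPts (h y)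
  omega

theorem iterate_depth_apply [Finite γ] (hy : y ∉ periodicPts h) :
    h^[depth h (h y)] (h y) = h^[depth h y] y := by
  rw [← iterate_succ_apply, ← depth_apply_add_one hy]

noncomputable def entry (h : γ → γ) (w y : γ) : ℕ :=
  sInf {j | h^[j] w = h^[depth h y] y}

theorem entry_apply [Finite γ] (hy : y ∉ periodicPts h) : entry h w (h y) = entry h w y := by
  rw [entry, entry, iterate_depth_apply hy]

theorem iterate_entry [Finite γ] (hh : FGConnected h) (w y : γ) :
    h^[entry h w y] w = h^[depth h y] y :=
  Nat.sInf_mem (hh.exists_iterate_eq_of_mem_periodicPts w (iterate_depth_mem_periodicPts y))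

theorem entry_lt [Finite γ] (hh : FGConnected h) (hw : w ∈ periodicPts h) (y : γ) :
    entry h w y < minimalPeriod h w := by
  refine (Nat.sInf_le ?_).trans_lt (Nat.mod_lt (entry h w y)
    (minimalPeriod_pos_of_mem_periodicPts hw))
  change h^[entry h w y % minimalPeriod h w] w = h^[depth h y] y
  rw [iterate_mod_minimalPeriod_eq, iterate_entry hh]

end Depth

section CanonicalLift

variable {γ : Type*} [Finite γ] {h : γ → γ} (c : ℕ) (w : γ) {y : γ}

noncomputable def cycleCoord (h : γ → γ) (y : γ) : ZMod c :=
  (entry h w y : ZMod c) - depth h y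

theorem iterate_depth_cycleCoord (hh : FGConnected h) (y : γ) :
    (prodMap (cyc c) h)^[depth h y] (cycleCoord c w h y, y) =
      (prodMap (cyc c) h)^[entry h w y] (0, w) := by
  rw [prodMap_iterate, prodMap_iterate, cyc_iterate, cyc_iterate, iterate_entry hh, cycleCoord,
    sub_add_cancel, zero_add]

noncomputable def canonicalLift (hh : FGConnected h) (y : γ) :
    Component (prodMap (cyc c) h) (0, w) :=
  ⟨(cycleCoord c w h y, y),
    eqvGen_iff_exists_iterate_eq.mpr ⟨_, _, iterate_depth_cycleCoord c w hh y⟩⟩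

variable (hh : FGConnected h)

theorem iterate_depth_canonicalLift (y : γ) :
    (Component.step _ _)^[depth h y] (canonicalLift c w hh y) =
      (Component.step _ _)^[entry h w y] (Component.base (prodMap (cyc c) h) (0, w)) :=
  Subtype.ext <| by
    rw [(Component.semiconj_val _ _).iterate_right, (Component.semiconj_val _ _).iterate_right]
    exact iterate_depth_cycleCoord c w hh y

theorem canonicalLift_apply (hy : y ∉ periodicPts h) :
    canonicalLift c w hh (h y) = Component.step _ _ (canonicalLift c w hh y) := by
  refine Subtype.ext (Prod.ext ?_ rfl)
  change cycleCoord c w h (h y) = cycleCoord c w h y + 1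
  rw [cycleCoord, cycleCoord, entry_apply hy, ← depth_apply_add_one hy]
  push_cast
  ring

end CanonicalLift

section CancelCycle

variable {γ γ' : Type*} {h : γ → γ} {h' : γ' → γ'} {c : ℕ} {w : γ} {w' : γ'}
  {Θ : Component (prodMap (cyc c) h) (0, w) → ZMod c × γ'}

theorem fst_eq_of_semiconj (hΘs : Semiconj Θ (Component.step _ _) (prodMap (cyc c) h'))
    (hΘ₀ : Θ (Component.base _ _) = (0, w')) (u : Component (prodMap (cyc c) h) (0, w)) :
    (Θ u).1 = u.1.1 :=
  congrFun (eq_of_semiconj_cyc (Component.fgConnected _ _) (ψ := fun u => (Θ u).1)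
    (ψ' := fun u => u.1.1) (fun u => congrArg Prod.fst (hΘs u)) (fun _ => rfl)
    (congrArg Prod.fst hΘ₀)) u

theorem snd_mem_periodicPts_iff [NeZero c] (hΘ : Injective Θ)
    (hΘs : Semiconj Θ (Component.step _ _) (prodMap (cyc c) h'))
    (u : Component (prodMap (cyc c) h) (0, w)) :
    (Θ u).2 ∈ periodicPts h' ↔ u.1.2 ∈ periodicPts h :=
  (mem_periodicPts_prodMap_cyc _).symm.trans <| (mem_periodicPts_iff_of_injective hΘ hΘs).trans <|
    (mem_periodicPts_iff_of_injective Subtype.val_injective (Component.semiconj_val _ _)).symm.trans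
      (mem_periodicPts_prodMap_cyc _)

theorem depth_snd_eq_of_injective [NeZero c] (hΘ : Injective Θ)
    (hΘs : Semiconj Θ (Component.step _ _) (prodMap (cyc c) h'))
    (u : Component (prodMap (cyc c) h) (0, w)) : depth h' (Θ u).2 = depth h u.1.2 := by
  have hper : ∀ n, h'^[n] (Θ u).2 ∈ periodicPts h' ↔ h^[n] u.1.2 ∈ periodicPts h := fun n => by
    have hsnd : h'^[n] (Θ u).2 = (Θ ((Component.step _ _)^[n] u)).2 := by
      rw [hΘs.iterate_right, prodMap_iterate]
    have hval : h^[n] u.1.2 = ((Component.step _ _)^[n] u).1.2 := by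
      rw [(Component.semiconj_val _ _).iterate_right, prodMap_iterate]
    rw [hsnd, hval]
    exact snd_mem_periodicPts_iff hΘ hΘs _
  simp only [depth, hper]

section

variable [Finite γ] (hh : FGConnected h)

theorem iterate_depth_snd_canonicalLift
    (hΘs : Semiconj Θ (Component.step _ _) (prodMap (cyc c) h'))
    (hΘ₀ : Θ (Component.base _ _) = (0, w')) (y : γ) :
    h'^[depth h y] (Θ (canonicalLift c w hh y)).2 = h'^[entry h w y] w' :=
  calc h'^[depth h y] (Θ (canonicalLift c w hh y)).2
      = (Θ ((Component.step _ _)^[depth h y] (canonicalLift c w hh y))).2 := by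
        rw [hΘs.iterate_right, prodMap_iterate]
    _ = h'^[entry h w y] w' := by
        rw [iterate_depth_canonicalLift, hΘs.iterate_right, hΘ₀, prodMap_iterate]

theorem injective_snd_canonicalLift [NeZero c] (hw : w ∈ periodicPts h)
    (hp : minimalPeriod h w = minimalPeriod h' w') (hΘ : Injective Θ)
    (hΘs : Semiconj Θ (Component.step _ _) (prodMap (cyc c) h'))
    (hΘ₀ : Θ (Component.base _ _) = (0, w')) :
    Injective fun y => (Θ (canonicalLift c w hh y)).2 := by
  intro y₁ y₂ hy
  dsimp only at hy
  have hd : depth h y₁ = depth h y₂ :=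
    calc depth h y₁ = depth h' (Θ (canonicalLift c w hh y₁)).2 :=
          (depth_snd_eq_of_injective hΘ hΘs (canonicalLift c w hh y₁)).symm
      _ = depth h y₂ := by
          rw [hy]; exact depth_snd_eq_of_injective hΘ hΘs (canonicalLift c w hh y₂)
  have he : entry h w y₁ = entry h w y₂ := by
    refine iterate_injOn_Iio_minimalPeriod (hp ▸ entry_lt hh hw y₁) (hp ▸ entry_lt hh hw y₂) ?_
    change h'^[entry h w y₁] w' = h'^[entry h w y₂] w'
    rw [← iterate_depth_snd_canonicalLift hh hΘs hΘ₀, ← iterate_depth_snd_canonicalLift hh hΘs hΘ₀,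
      hd, hy]
  refine congrArg (fun u => u.1.2) (hΘ (Prod.ext ?_ hy))
  rw [fst_eq_of_semiconj hΘs hΘ₀, fst_eq_of_semiconj hΘs hΘ₀]
  change cycleCoord c w h y₁ = cycleCoord c w h y₂
  rw [cycleCoord, cycleCoord, hd, he]

theorem semiconj_snd_canonicalLift (hw : w ∈ periodicPts h)
    (hp : minimalPeriod h w = minimalPeriod h' w')
    (hΘs : Semiconj Θ (Component.step _ _) (prodMap (cyc c) h'))
    (hΘ₀ : Θ (Component.base _ _) = (0, w')) :
    Semiconj (fun y => (Θ (canonicalLift c w hh y)).2) h h' := by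
  intro y
  change (Θ (canonicalLift c w hh (h y))).2 = h' (Θ (canonicalLift c w hh y)).2
  by_cases hy : y ∈ periodicPts h
  -- On the cycle the lift is not equivariant (it wraps around after `minimalPeriod h w` steps),
  -- so compare positions along the orbits of `w` and `w'` instead.
  · have hy' : h y ∈ periodicPts h := (bijOn_periodicPts h).mapsTo hy
    have hφ := iterate_depth_snd_canonicalLift hh hΘs hΘ₀ y
    have hφ' := iterate_depth_snd_canonicalLift hh hΘs hΘ₀ (h y)
    rw [depth_eq_zero hy, iterate_zero_apply] at hφ
    rw [depth_eq_zero hy', iterate_zero_apply] at hφ'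
    rw [hφ, hφ', ← iterate_succ_apply' h']
    refine iterate_eq_iterate_of_minimalPeriod_eq hw hp ?_
    rw [iterate_succ_apply', iterate_entry hh, iterate_entry hh, depth_eq_zero hy,
      depth_eq_zero hy']
    rfl
  · rw [canonicalLift_apply c w hh hy, hΘs]
    rfl

end

theorem exists_injective_semiconj_of_component [Finite γ] [NeZero c] (hh : FGConnected h)
    (hw : w ∈ periodicPts h)
    (hp : minimalPeriod h w = minimalPeriod h' w') (hΘ : Injective Θ)
    (hΘs : Semiconj Θ (Component.step _ _) (prodMap (cyc c) h'))
    (hΘ₀ : Θ (Component.base _ _) = (0, w')) :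
    ∃ φ : γ → γ', Injective φ ∧ Semiconj φ h h' :=
  ⟨_, injective_snd_canonicalLift hh hw hp hΘ hΘs hΘ₀, semiconj_snd_canonicalLift hh hw hp hΘs hΘ₀⟩

end CancelCycle

section Main

variable {α β γ γ' : Type*} {f : α → α} {g : β → β} {h : γ → γ} {h' : γ' → γ'}

theorem fgIso_of_injective [Finite γ] [Finite γ'] {φ : γ → γ'} {ψ : γ' → γ} (hφ : Injective φ)
    (hφs : Semiconj φ h h') (hψ : Injective ψ) : FGIso h h' :=
  ⟨Equiv.ofBijective φ ((Nat.bijective_iff_injective_and_card φ).mpr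
    ⟨hφ, (Nat.card_le_card_of_injective φ hφ).antisymm (Nat.card_le_card_of_injective ψ hψ)⟩), hφs⟩

/-- The cycle of length `c` winds onto the orbit of `(e b).1`, so whenever `T` maps to it the
non-zero factor `numHom Tf f t₀ (e b).1` can be cancelled from `numHom Tf g t₀ b`. -/
theorem numHom_prodMap_cyc_eq [Finite α] {e : β → α × γ} {e' : β → α × γ'}
    (he : IsComponentEmbedding (prodMap f h) g e) (he' : IsComponentEmbedding (prodMap f h') g e')
    {b : β} (hfst : (e b).1 = (e' b).1) {c : ℕ} [NeZero c] (hc : IsPeriodicPt f c (e b).1)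
    {T : Type*} [Finite T] {Tf : T → T} (hT : FGConnected Tf) (t₀ : T) :
    numHom Tf (prodMap (cyc c) h) t₀ (0, (e b).2) =
      numHom Tf (prodMap (cyc c) h') t₀ (0, (e' b).2) := by
  rw [numHom_prodMap, numHom_prodMap]
  rcases eq_or_ne (numHom Tf (cyc c) t₀ 0) 0 with h0 | hpos
  · rw [h0, zero_mul, zero_mul]
  congr 1
  refine Nat.eq_of_mul_eq_mul_left
    (Nat.pos_of_ne_zero (numHom_ne_zero_of_numHom_cyc_ne_zero hc hpos)) ?_
  rw [← numHom_prodMap, ← he.numHom_eq hT, he'.numHom_eq hT, hfst, numHom_prodMap]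

theorem exists_injective_semiconj_of_fst_eq [Finite α] [Finite γ] [Finite γ']
    (hh : FGConnected h) (hh' : FGConnected h') (hp : periodicCount h = periodicCount h')
    {e : β → α × γ} {e' : β → α × γ'} (he : IsComponentEmbedding (prodMap f h) g e)
    (he' : IsComponentEmbedding (prodMap f h') g e') {b : β} (hb : b ∈ periodicPts g)
    (hfst : (e b).1 = (e' b).1) : ∃ φ : γ → γ', Injective φ ∧ Semiconj φ h h' := by
  obtain ⟨⟨c, hc0, hc⟩, hw⟩ := mem_periodicPts_prodMap (he.semiconj.mapsTo_periodicPts hb)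
  have hw' := (mem_periodicPts_prodMap (he'.semiconj.mapsTo_periodicPts hb)).2
  have : NeZero c := ⟨hc0.ne'⟩
  have hpw : minimalPeriod h (e b).2 = minimalPeriod h' (e' b).2 := by
    rw [← hh.periodicCount_eq_minimalPeriod hw, ← hh'.periodicCount_eq_minimalPeriod hw', hp]
  obtain ⟨Θ, hΘ, hΘs, hΘ₀⟩ := exists_injective_of_numHom_eq
    (fun _ _ _ t₀ hT => numHom_prodMap_cyc_eq he he' hfst hc hT t₀)
    (Component.fgConnected _ _) (t₀ := Component.base _ (0, (e b).2)) Subtype.val_injective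
    (Component.semiconj_val _ _) rfl
  exact exists_injective_semiconj_of_component hh hw hpw hΘ hΘs hΘ₀

theorem fgIso_of_fst_eq [Finite α] [Finite γ] [Finite γ'] (hh : FGConnected h)
    (hh' : FGConnected h') (hp : periodicCount h = periodicCount h') {e : β → α × γ}
    {e' : β → α × γ'} (he : IsComponentEmbedding (prodMap f h) g e)
    (he' : IsComponentEmbedding (prodMap f h') g e') {b : β} (hb : b ∈ periodicPts g)
    (hfst : (e b).1 = (e' b).1) : FGIso h h' :=
  let ⟨_, hφ, hφs⟩ := exists_injective_semiconj_of_fst_eq hh hh' hp he he' hb hfst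
  let ⟨_, hψ, _⟩ := exists_injective_semiconj_of_fst_eq hh' hh hp.symm he' he hb hfst.symm
  fgIso_of_injective hφ hφs hψ

end Main

end DDS

theorem upper_bound_solutions_lcm_general {α β : Type*} [Fintype α] [Fintype β] [Nonempty β]
    (f : α → α) (g : β → β)
    (p : ℕ)
    (m : ℕ) (γ : Fin m → Type*) [∀ i, Fintype (γ i)]
    (h : ∀ i, γ i → γ i)
    (hconn : ∀ i, FGConnected (h i))
    (hper : ∀ i, periodicCount (h i) = p)
    (hcont : ∀ i, FGContains f (h i) g)
    (hnoniso : ∀ i j, i ≠ j → ¬ FGIso (h i) (h j)) :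
    m ≤ periodicCount f := by
  obtain ⟨n, hb⟩ := exists_iterate_mem_periodicPts g (Classical.arbitrary β)
  choose e he using fun i => fgContains_iff.mp (hcont i)
  have ha : ∀ i, (e i (g^[n] _)).1 ∈ periodicPts f := fun i =>
    (mem_periodicPts_prodMap ((he i).semiconj.mapsTo_periodicPts hb)).1
  have hinj : Injective fun i => (⟨_, ha i⟩ : periodicPts f) :=
    fun i j hij => by_contra fun hne => hnoniso i j hne <| fgIso_of_fst_eq (hconn i) (hconn j)
      ((hper i).trans (hper j).symm) (he i) (he j) hb (congrArg Subtype.val hij)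
  exact (Nat.card_fin m).symm.trans_le (Nat.card_le_card_of_injective _ hinj)

/-- Corollary: with cycle lengths `c_A = |𝒫_A|`, `c_B = |𝒫_B|` and `p ≥ 1` such that
`lcm(c_A, p) = c_B`, any family of pairwise non-isomorphic connected FGs `hᵢ`, each with
exactly `p` periodic points and each with `f × hᵢ ⊇ g`, has at most `c_A` members. -/
theorem upper_bound_solutions_lcm {α β : Type*} [Fintype α] [Fintype β] [Nonempty α] [Nonempty β]
    (f : α → α) (g : β → β) (hf : FGConnected f) (hg : FGConnected g)
    (p : ℕ) (hp : 1 ≤ p)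
    (hlcm : Nat.lcm (periodicCount f) p = periodicCount g)
    (m : ℕ) (γ : Fin m → Type*) [∀ i, Fintype (γ i)] [∀ i, Nonempty (γ i)]
    (h : ∀ i, γ i → γ i)
    (hconn : ∀ i, FGConnected (h i))
    (hper : ∀ i, periodicCount (h i) = p)
    (hcont : ∀ i, FGContains f (h i) g)
    (hnoniso : ∀ i j, i ≠ j → ¬ FGIso (h i) (h j)) :
    m ≤ periodicCount f :=
  upper_bound_solutions_lcm_general f g p m γ h hconn hper hcont hnoniso
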